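/- Let N ≥ 3 and let σ_N denote the (N−1)-dimensional surface measure of the unit sphere of ℝ^N. Let V : (0,∞) → [0,+∞] be measurable, let R > 0 and γ₀ ≥ 2 be such that V(r) < +∞ for almost every r ∈ (0,R) and λ₀ := essinf_{r∈(0,R)} r^{γ₀} V(r) > 0. Then every radially symmetric function u ∈ C¹(ℝ^N) with ∫_{ℝ^N} |∇u|² dx < ∞ and ∫_{ℝ^N} V(|x|) u(x)² dx < ∞ satisfies |u(x)| ≤ √(max{2, N−2}/σ_N) · ( λ₀^{−1/2} + R^{(γ₀−2)/2} λ₀^{−1} )^{1/2} · ‖u‖_V · |x|^{−(2N−2−γ₀)/4} for every x with 0 < |x| < R. -/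

import Mathlib

/-!
Write `u x = w ‖x‖` and `α = N - 1 - γ / 2`. In polar coordinates the two halves of `‖u‖_V²`
dominate `σ_N ∫₀^∞ t^(N-1) w'² dt` and `σ_N λ₀ ∫₀^R t^(N-1-γ) w² dt`. For `0 < t < R` the
derivative of `w² t^α` is at most `c t^(N-1) w'² + (c⁻¹ + M R^((γ-2)/2)) t^(N-1-γ) w²`, where
`M = max 2 (N - 2)`: AM-GM with weight `c = λ₀^(-1/2)` bounds `2 w w' t^α`, and `α ≤ N - 2 ≤ M`
bounds `α t^(α-1) w²`.
Integrating over `(s, r)` and letting `s → 0` along points where `w(s)² s^α` is small bounds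
`w(r)² r^α` by a multiple of `‖u‖_V²`; such points exist because `t^(N-1-γ) w² = (w² t^α) t^(-γ/2)`
is integrable near `0` while `t^(-γ/2)` is not.
-/

open MeasureTheory Filter Set
open scoped ENNReal

/-- `σ_N`, the (N−1)-dimensional surface measure of the unit sphere of `ℝ^N`,
equals `N` times the Lebesgue volume of the unit ball. -/
noncomputable def sphereSurfaceMeasure (N : ℕ) : ℝ :=
  (N : ℝ) * (volume (Metric.ball (0 : EuclideanSpace ℝ (Fin N)) 1)).toReal

open Metric

local notation "dim" => Module.finrank ℝ

theorem integrable_and_mul_integral_le_toReal {α : Type*} [MeasurableSpace α] {μ : Measure α}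
    {f : α → ℝ} {c : ℝ} {b : ℝ≥0∞} (hc : 0 < c) (hb : b ≠ ⊤) (hf : AEStronglyMeasurable f μ)
    (hf₀ : 0 ≤ᵐ[μ] f) (h : ENNReal.ofReal c * ∫⁻ x, ENNReal.ofReal (f x) ∂μ ≤ b) :
    Integrable f μ ∧ c * ∫ x, f x ∂μ ≤ b.toReal := by
  have hfin : ∫⁻ x, ENNReal.ofReal (f x) ∂μ ≠ ⊤ := fun htop ↦ hb <| top_le_iff.1 <| by
    rwa [htop, ENNReal.mul_top (ENNReal.ofReal_pos.2 hc).ne'] at h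
  refine ⟨(lintegral_ofReal_ne_top_iff_integrable hf hf₀).1 hfin, ?_⟩
  rw [integral_eq_lintegral_of_nonneg_ae hf₀ hf, ← ENNReal.toReal_ofReal hc.le,
    ← ENNReal.toReal_mul]
  exact ENNReal.toReal_mono hb h

theorem essInf_lt_of_ae_lt {α β : Type*} [MeasurableSpace α] [CompleteLinearOrder β]
    [TopologicalSpace β] [FirstCountableTopology β] [OrderTopology β]
    {μ : Measure α} (hμ : μ ≠ 0) {f : α → β} {c : β} (hf : ∀ᵐ x ∂μ, f x < c) :
    essInf f μ < c := by
  have := ae_neBot.2 hμ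
  obtain ⟨x, hle, hlt⟩ := ((ae_essInf_le (f := f)).and hf).exists
  exact hle.trans_lt hlt

section OneDim

variable {d γ c t : ℝ}

theorem two_mul_mul_rpow_le (hc : 0 < c) (ht : 0 < t) (a b : ℝ) :
    2 * a * b * t ^ (d - 1 - γ / 2) ≤
      c * (t ^ (d - 1) * b ^ 2) + c⁻¹ * (t ^ (d - 1 - γ) * a ^ 2) := by
  have hsq : ∀ p : ℝ, (t ^ (p / 2)) ^ 2 = t ^ p := fun p ↦ by
    rw [sq, ← Real.rpow_add ht, add_halves]
  calc 2 * a * b * t ^ (d - 1 - γ / 2)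
      = 2 * (t ^ ((d - 1) / 2) * b) * (t ^ ((d - 1 - γ) / 2) * a) := by
        rw [show ∀ x y : ℝ, 2 * (x * b) * (y * a) = 2 * a * b * (x * y) from fun x y ↦ by ring,
          ← Real.rpow_add ht]
        ring_nf
    _ ≤ c * (t ^ ((d - 1) / 2) * b) ^ 2 + c⁻¹ * (t ^ ((d - 1 - γ) / 2) * a) ^ 2 :=
        two_mul_le_add_mul_sq hc
    _ = _ := by rw [mul_pow, mul_pow, hsq, hsq]

theorem mul_rpow_sub_one_le {M R : ℝ} (hγ : 2 ≤ γ) (hM : 0 ≤ M) (hdM : d - 2 ≤ M) (ht : 0 < t)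
    (htR : t ≤ R) :
    (d - 1 - γ / 2) * t ^ (d - 1 - γ / 2 - 1) ≤ M * R ^ ((γ - 2) / 2) * t ^ (d - 1 - γ) :=
  calc (d - 1 - γ / 2) * t ^ (d - 1 - γ / 2 - 1) ≤ M * t ^ (d - 1 - γ / 2 - 1) :=
        mul_le_mul_of_nonneg_right (by linarith) (Real.rpow_nonneg ht.le _)
    _ = M * (t ^ ((γ - 2) / 2) * t ^ (d - 1 - γ)) := by
        rw [← Real.rpow_add ht]
        ring_nf
    _ ≤ M * (R ^ ((γ - 2) / 2) * t ^ (d - 1 - γ)) := by gcongr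
    _ = _ := by ring

theorem exists_lt_of_integrableOn_mul_rpow {h : ℝ → ℝ} {p r ε : ℝ} (hp : 1 ≤ p) (hr : 0 < r)
    (hε : 0 < ε) (hh : IntegrableOn (fun t ↦ h t * t ^ (-p)) (Ioo 0 r)) :
    ∃ s ∈ Ioo 0 r, h s < ε := by
  by_contra! hge
  have hmeas : AEStronglyMeasurable (fun t : ℝ ↦ t ^ (-p)) (volume.restrict (Ioo 0 r)) :=
    (ContinuousOn.rpow_const continuousOn_id fun t ht ↦ Or.inl ht.1.ne').aestronglyMeasurable
      measurableSet_Ioo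
  have hint : IntegrableOn (fun t : ℝ ↦ ε * t ^ (-p)) (Ioo 0 r) := by
    refine hh.mono' (hmeas.const_mul ε) ((ae_restrict_mem measurableSet_Ioo).mono fun t ht ↦ ?_)
    have htp := Real.rpow_nonneg ht.1.le (-p)
    rw [Real.norm_of_nonneg (by positivity)]
    exact mul_le_mul_of_nonneg_right (hge t ht) htp
  have := (intervalIntegral.integrableOn_Ioo_rpow_iff hr).1
    ((integrable_const_mul_iff (isUnit_iff_ne_zero.2 hε.ne') _).1 hint)
  linarith

theorem sq_mul_rpow_le_of_hasDerivAt {w w' : ℝ → ℝ} {M R r : ℝ} (hγ : 2 ≤ γ) (hM : 0 ≤ M)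
    (hdM : d - 2 ≤ M) (hc : 0 < c) (hr : 0 < r) (hrR : r < R)
    (hw : ∀ t ∈ Ioi (0 : ℝ), HasDerivAt w (w' t) t)
    (hI₁ : IntegrableOn (fun t ↦ t ^ (d - 1) * w' t ^ 2) (Ioi 0))
    (hI₂ : IntegrableOn (fun t ↦ t ^ (d - 1 - γ) * w t ^ 2) (Ioo 0 R)) :
    w r ^ 2 * r ^ (d - 1 - γ / 2) ≤
      c * (∫ t in Ioi 0, t ^ (d - 1) * w' t ^ 2) +
        (c⁻¹ + M * R ^ ((γ - 2) / 2)) * ∫ t in Ioo 0 R, t ^ (d - 1 - γ) * w t ^ 2 := by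
  set α := d - 1 - γ / 2
  set K := c⁻¹ + M * R ^ ((γ - 2) / 2)
  have hK : 0 ≤ K :=
    add_nonneg (inv_nonneg.2 hc.le) (mul_nonneg hM (Real.rpow_nonneg (hr.trans hrR).le _))
  have hderiv : ∀ t ∈ Ioi (0 : ℝ), HasDerivAt (fun t ↦ w t ^ 2 * t ^ α)
      ((2 : ℕ) * w t ^ (2 - 1) * w' t * t ^ α + w t ^ 2 * (α * t ^ (α - 1))) t :=
    fun t ht ↦ ((hw t ht).pow 2).mul (Real.hasDerivAt_rpow_const (Or.inl (ne_of_gt ht)))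
  have hstep : ∀ s ∈ Ioo 0 r, w r ^ 2 * r ^ α - w s ^ 2 * s ^ α ≤
      c * (∫ t in Ioi 0, t ^ (d - 1) * w' t ^ 2) +
        K * ∫ t in Ioo 0 R, t ^ (d - 1 - γ) * w t ^ 2 := by
    intro s hs
    have hsub₁ : Icc s r ⊆ Ioi 0 := fun t ht ↦ hs.1.trans_le ht.1
    have hsub₂ : Icc s r ⊆ Ioo 0 R := fun t ht ↦ ⟨hs.1.trans_le ht.1, ht.2.trans_lt hrR⟩
    have hJ₁ := hI₁.mono_set hsub₁
    have hJ₂ := hI₂.mono_set hsub₂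
    calc w r ^ 2 * r ^ α - w s ^ 2 * s ^ α
        ≤ ∫ t in s..r, (c * (t ^ (d - 1) * w' t ^ 2) + K * (t ^ (d - 1 - γ) * w t ^ 2)) := by
          refine intervalIntegral.sub_le_integral_of_hasDeriv_right_of_le hs.2.le
            (fun t ht ↦ (hderiv t (hsub₁ ht)).continuousAt.continuousWithinAt)
            (fun t ht ↦ (hderiv t (hsub₁ (Ioo_subset_Icc_self ht))).hasDerivWithinAt)
            ((hJ₁.const_mul c).add (hJ₂.const_mul K)) fun t ht ↦ ?_
          have ht₀ : 0 < t := hs.1.trans ht.1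
          have h₁ := two_mul_mul_rpow_le (d := d) (γ := γ) hc ht₀ (w t) (w' t)
          have h₂ := mul_le_mul_of_nonneg_left
            (mul_rpow_sub_one_le hγ hM hdM ht₀ (ht.2.trans hrR).le) (sq_nonneg (w t))
          norm_num [α, K]
          linarith
      _ = c * (∫ t in Ioc s r, t ^ (d - 1) * w' t ^ 2) +
            K * ∫ t in Ioc s r, t ^ (d - 1 - γ) * w t ^ 2 := by
          rw [intervalIntegral.integral_of_le hs.2.le,
            integral_add ((hJ₁.mono_set Ioc_subset_Icc_self).const_mul c)
              ((hJ₂.mono_set Ioc_subset_Icc_self).const_mul K),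
            integral_const_mul, integral_const_mul]
      _ ≤ _ := by
          gcongr
          · exact (ae_restrict_mem measurableSet_Ioi).mono fun t ht ↦
              mul_nonneg (Real.rpow_nonneg (le_of_lt ht) _) (sq_nonneg _)
          · exact fun t ht ↦ hs.1.trans ht.1
          · exact (ae_restrict_mem measurableSet_Ioo).mono fun t ht ↦
              mul_nonneg (Real.rpow_nonneg ht.1.le _) (sq_nonneg _)
          · exact fun t ht ↦ ⟨hs.1.trans ht.1, ht.2.trans_lt hrR⟩
  -- `t ^ (d - 1 - γ)` is `t ^ α` times the non-integrable weight `t ^ (-γ / 2)`.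
  have hsmall : ∀ ε > 0, ∃ s ∈ Ioo 0 r, w s ^ 2 * s ^ α < ε := by
    intro ε hε
    refine exists_lt_of_integrableOn_mul_rpow (h := fun t ↦ w t ^ 2 * t ^ α) (p := γ / 2)
      (by linarith) hr hε ?_
    refine (hI₂.mono_set fun t ht ↦ ⟨ht.1, ht.2.trans hrR⟩).congr_fun (fun t ht ↦ ?_)
      measurableSet_Ioo
    simp only [α]
    rw [mul_assoc, ← Real.rpow_add ht.1, mul_comm]
    ring_nf
  refine le_of_forall_pos_le_add fun ε hε ↦ ?_
  obtain ⟨s, hs, hsε⟩ := hsmall ε hε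
  linarith [hstep s hs]

end OneDim

section Profile

variable {E F : Type*} [NormedAddCommGroup E] [NormedSpace ℝ E]

theorem apply_eq_apply_norm_smul {u : E → F} {w : ℝ → F} (hw : ∀ x, u x = w ‖x‖) {e : E}
    (he : ‖e‖ = 1) (x : E) : u x = u (‖x‖ • e) := by
  rw [hw, hw, norm_smul, he, mul_one, norm_norm]

theorem hasDerivAt_apply_smul [NormedAddCommGroup F] [NormedSpace ℝ F] {u : E → F} {e : E}
    {t : ℝ} (hu : DifferentiableAt ℝ u (t • e)) :
    HasDerivAt (fun s : ℝ ↦ u (s • e)) (fderiv ℝ u (t • e) e) t := by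
  have hsmul : HasDerivAt (fun s : ℝ ↦ s • e) e t := by
    simpa using (hasDerivAt_id t).smul_const e
  exact hu.hasFDerivAt.comp_hasDerivAt t hsmul

end Profile

section Radial

variable {E : Type*} [NormedAddCommGroup E] [InnerProductSpace ℝ E]

theorem norm_fderiv_eq_of_norm_eq {u : E → ℝ} {w : ℝ → ℝ} (hw : ∀ x, u x = w ‖x‖) {x y : E}
    (h : ‖x‖ = ‖y‖) : ‖fderiv ℝ u x‖ = ‖fderiv ℝ u y‖ := by
  set A := (ℝ ∙ (x - y))ᗮ.reflection
  have hAu : u ∘ A = u := funext fun z ↦ by simp only [Function.comp_apply, hw, A.norm_map]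
  have hder := A.toContinuousLinearEquiv.comp_right_fderiv (𝕜 := ℝ) (f := u) (x := x)
  rw [show u ∘ A.toContinuousLinearEquiv = u from hAu,
    show A.toContinuousLinearEquiv x = y from Submodule.reflection_sub h] at hder
  rw [hder]
  exact ContinuousLinearMap.opNorm_comp_linearIsometryEquiv _ A

variable [FiniteDimensional ℝ E] [MeasurableSpace E] (μ : Measure E) [μ.IsAddHaarMeasure]

theorem ofReal_finrank_mul_measureReal_ball :
    ENNReal.ofReal (dim E * μ.real (ball 0 1)) = dim E * μ (ball 0 1) := by
  rw [ENNReal.ofReal_mul (Nat.cast_nonneg _), ENNReal.ofReal_natCast, measureReal_def,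
    ENNReal.ofReal_toReal measure_ball_lt_top.ne]

variable [Nontrivial E]

theorem finrank_mul_measureReal_ball_pos : 0 < dim E * μ.real (ball 0 1) :=
  mul_pos (Nat.cast_pos.2 Module.finrank_pos)
    (ENNReal.toReal_pos (measure_ball_pos μ 0 one_pos).ne' measure_ball_lt_top.ne)

variable [BorelSpace E]

theorem lintegral_comp_norm_eq (f : ℝ → ℝ≥0∞) (hf : Measurable f) :
    ∫⁻ x, f ‖x‖ ∂μ =
      dim E * μ (ball 0 1) * ∫⁻ y in Ioi (0 : ℝ), ENNReal.ofReal (y ^ ((dim E : ℝ) - 1)) * f y :=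
  calc ∫⁻ x, f ‖x‖ ∂μ = ∫⁻ x : ({(0)}ᶜ : Set E), f ‖x.1‖ ∂(μ.comap (↑)) := by
        rw [lintegral_subtype_comap (measurableSet_singleton _).compl fun x ↦ f ‖x‖,
          restrict_compl_singleton]
    _ = ∫⁻ x, f x.2 ∂μ.toSphere.prod (.volumeIoiPow (dim E - 1)) := by
        simpa using μ.measurePreserving_homeomorphUnitSphereProd.lintegral_comp_emb
          (Homeomorph.measurableEmbedding _) (fun p ↦ f p.2)
    _ = μ.toSphere univ * ∫⁻ x : Ioi (0 : ℝ), f x ∂.volumeIoiPow (dim E - 1) := by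
        rw [lintegral_prod (fun p : sphere (0 : E) 1 × Ioi (0 : ℝ) ↦ f p.2)
          (hf.comp (measurable_subtype_coe.comp measurable_snd)).aemeasurable]
        simp only [lintegral_const, mul_comm]
    _ = _ := by
        rw [Measure.toSphere_apply_univ, Measure.volumeIoiPow,
          lintegral_withDensity_eq_lintegral_mul _ (g := fun y : Ioi (0 : ℝ) ↦ f y)
            (measurable_subtype_coe.pow_const _).ennreal_ofReal (hf.comp measurable_subtype_coe),
          ← Nat.cast_pred Module.finrank_pos]
        simp_rw [Real.rpow_natCast]
        exact congrArg _ (lintegral_subtype_comap measurableSet_Ioi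
          fun y ↦ ENNReal.ofReal (y ^ (dim E - 1)) * f y)

theorem integrableOn_and_integral_radial_deriv_sq_le {u : E → ℝ} {w : ℝ → ℝ}
    (hw : ∀ x, u x = w ‖x‖) {e : E} (he : ‖e‖ = 1)
    (hgrad : Integrable (fun x ↦ ‖fderiv ℝ u x‖ ^ 2) μ) :
    IntegrableOn (fun t ↦ t ^ ((dim E : ℝ) - 1) * fderiv ℝ u (t • e) e ^ 2) (Ioi 0) ∧
      dim E * μ.real (ball 0 1) * ∫ t in Ioi 0, t ^ ((dim E : ℝ) - 1) * fderiv ℝ u (t • e) e ^ 2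
        ≤ ∫ x, ‖fderiv ℝ u x‖ ^ 2 ∂μ := by
  set G : ℝ → ℝ := fun t ↦ ‖fderiv ℝ u (t • e)‖ ^ 2
  have hG : Measurable G :=
    ((measurable_fderiv ℝ u).comp (measurable_id.smul_const e)).norm.pow_const 2
  have hradial : ∀ x, ‖fderiv ℝ u x‖ ^ 2 = G ‖x‖ := fun x ↦ by
    rw [norm_fderiv_eq_of_norm_eq hw (y := ‖x‖ • e) (by rw [norm_smul, he, mul_one, norm_norm])]
  rw [integral_eq_lintegral_of_nonneg_ae (ae_of_all _ fun x ↦ by positivity)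
    hgrad.aestronglyMeasurable]
  refine integrable_and_mul_integral_le_toReal (finrank_mul_measureReal_ball_pos μ)
    hgrad.lintegral_lt_top.ne ?_ ?_ ?_
  · exact ((measurable_id.pow_const _).mul
      (((measurable_fderiv_apply_const ℝ u e).comp (measurable_id.smul_const e)).pow_const 2))
      |>.aestronglyMeasurable
  · exact (ae_restrict_mem measurableSet_Ioi).mono fun t ht ↦
      mul_nonneg (Real.rpow_nonneg (mem_Ioi.1 ht).le _) (sq_nonneg _)
  calc ENNReal.ofReal (dim E * μ.real (ball 0 1)) *
        ∫⁻ t in Ioi 0, ENNReal.ofReal (t ^ ((dim E : ℝ) - 1) * fderiv ℝ u (t • e) e ^ 2)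
      ≤ dim E * μ (ball 0 1) *
        ∫⁻ t in Ioi 0, ENNReal.ofReal (t ^ ((dim E : ℝ) - 1)) * ENNReal.ofReal (G t) := by
        rw [ofReal_finrank_mul_measureReal_ball]
        refine mul_le_mul_right (setLIntegral_mono' measurableSet_Ioi fun t ht ↦ ?_) _
        rw [← ENNReal.ofReal_mul (Real.rpow_nonneg (mem_Ioi.1 ht).le _)]
        refine ENNReal.ofReal_le_ofReal
          (mul_le_mul_of_nonneg_left (sq_le_sq.2 ?_) (Real.rpow_nonneg (mem_Ioi.1 ht).le _))
        simpa [he] using (fderiv ℝ u (t • e)).le_opNorm e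
    _ = ∫⁻ x, ENNReal.ofReal (‖fderiv ℝ u x‖ ^ 2) ∂μ := by
        simp_rw [hradial]
        exact (lintegral_comp_norm_eq μ _ hG.ennreal_ofReal).symm

theorem integrableOn_and_integral_potential_le {V : ℝ → ℝ≥0∞} (hV : Measurable V) {u : E → ℝ}
    (hu : Measurable u) {w : ℝ → ℝ} (hw : ∀ x, u x = w ‖x‖) {e : E} (he : ‖e‖ = 1)
    {R γ : ℝ} {lam : ℝ≥0∞} (hlam₀ : lam ≠ 0) (hlam : lam ≠ ⊤)
    (hVlam : ∀ᵐ t ∂volume.restrict (Ioo 0 R), lam ≤ ENNReal.ofReal (t ^ γ) * V t)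
    (hVu : ∫⁻ x, V ‖x‖ * ENNReal.ofReal (u x ^ 2) ∂μ ≠ ⊤) :
    IntegrableOn (fun t ↦ t ^ ((dim E : ℝ) - 1 - γ) * u (t • e) ^ 2) (Ioo 0 R) ∧
      dim E * μ.real (ball 0 1) * lam.toReal *
          ∫ t in Ioo 0 R, t ^ ((dim E : ℝ) - 1 - γ) * u (t • e) ^ 2
        ≤ (∫⁻ x, V ‖x‖ * ENNReal.ofReal (u x ^ 2) ∂μ).toReal := by
  set F : ℝ → ℝ≥0∞ := fun t ↦ V t * ENNReal.ofReal (u (t • e) ^ 2)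
  have hue : Measurable fun t : ℝ ↦ u (t • e) := hu.comp (measurable_id.smul_const e)
  have hradial : ∀ x, V ‖x‖ * ENNReal.ofReal (u x ^ 2) = F ‖x‖ := fun x ↦ by
    rw [apply_eq_apply_norm_smul hw he x]
  have hσ := finrank_mul_measureReal_ball_pos μ
  refine integrable_and_mul_integral_le_toReal
    (mul_pos hσ (ENNReal.toReal_pos hlam₀ hlam)) hVu ?_ ?_ ?_
  · exact ((measurable_id.pow_const _).mul (hue.pow_const 2)).aestronglyMeasurable
  · exact (ae_restrict_mem measurableSet_Ioo).mono fun t ht ↦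
      mul_nonneg (Real.rpow_nonneg ht.1.le _) (sq_nonneg _)
  calc ENNReal.ofReal (dim E * μ.real (ball 0 1) * lam.toReal) *
        ∫⁻ t in Ioo 0 R, ENNReal.ofReal (t ^ ((dim E : ℝ) - 1 - γ) * u (t • e) ^ 2)
      = dim E * μ (ball 0 1) * ∫⁻ t in Ioo 0 R,
          lam * ENNReal.ofReal (t ^ ((dim E : ℝ) - 1 - γ) * u (t • e) ^ 2) := by
        rw [ENNReal.ofReal_mul hσ.le, ofReal_finrank_mul_measureReal_ball, mul_assoc,
          ENNReal.ofReal_toReal hlam, lintegral_const_mul' _ _ hlam]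
    _ ≤ dim E * μ (ball 0 1) * ∫⁻ t in Ioo 0 R, ENNReal.ofReal (t ^ ((dim E : ℝ) - 1)) * F t := by
        refine mul_le_mul_right (lintegral_mono_ae ?_) _
        filter_upwards [hVlam, ae_restrict_mem measurableSet_Ioo] with t hVt ht
        have hsplit : t ^ ((dim E : ℝ) - 1) = t ^ γ * t ^ ((dim E : ℝ) - 1 - γ) := by
          rw [← Real.rpow_add ht.1]
          ring_nf
        calc lam * ENNReal.ofReal (t ^ ((dim E : ℝ) - 1 - γ) * u (t • e) ^ 2)
            ≤ ENNReal.ofReal (t ^ γ) * V t *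
                ENNReal.ofReal (t ^ ((dim E : ℝ) - 1 - γ) * u (t • e) ^ 2) :=
              mul_le_mul_left hVt _
          _ = _ := by
              simp only [F]
              rw [hsplit, ENNReal.ofReal_mul (Real.rpow_nonneg ht.1.le _),
                ENNReal.ofReal_mul (Real.rpow_nonneg ht.1.le _)]
              ring
    _ ≤ dim E * μ (ball 0 1) * ∫⁻ t in Ioi 0, ENNReal.ofReal (t ^ ((dim E : ℝ) - 1)) * F t :=
        mul_le_mul_right (lintegral_mono_set Ioo_subset_Ioi_self) _
    _ = ∫⁻ x, V ‖x‖ * ENNReal.ofReal (u x ^ 2) ∂μ := by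
        simp_rw [hradial]
        exact (lintegral_comp_norm_eq μ F (hV.mul (hue.pow_const 2).ennreal_ofReal)).symm

end Radial

theorem abs_le_of_sq_mul_rpow_le {a r α σ lam K M I₁ I₂ A B : ℝ} (hr : 0 < r) (hσ : 0 < σ)
    (hlam : 0 < lam) (hK : 0 ≤ K) (hM : 1 ≤ M) (hA₀ : 0 ≤ A) (hB₀ : 0 ≤ B) (hA : σ * I₁ ≤ A)
    (hB : σ * lam * I₂ ≤ B)
    (h : a ^ 2 * r ^ α ≤ lam ^ (-(1 / 2 : ℝ)) * I₁ + ((lam ^ (-(1 / 2 : ℝ)))⁻¹ + M * K) * I₂) :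
    |a| ≤ √(M / σ) * √(lam ^ (-(1 / 2 : ℝ)) + K * lam⁻¹) * √(A + B) * r ^ (-α / 2) := by
  set c := lam ^ (-(1 / 2 : ℝ)) with hc_def
  have hc : 0 < c := Real.rpow_pos_of_pos hlam _
  have hcinv : c⁻¹ = c * lam := by
    rw [hc_def, Real.rpow_neg hlam.le, ← Real.sqrt_eq_rpow, inv_inv, inv_mul_eq_div,
      Real.div_sqrt]
  have hC : 0 ≤ M / σ * (c + K * lam⁻¹) := by positivity
  have key : a ^ 2 * r ^ α ≤ M / σ * (c + K * lam⁻¹) * (A + B) := by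
    have h₁ : σ * (c * I₁ + c⁻¹ * I₂) ≤ M * c * (A + B) :=
      calc σ * (c * I₁ + c⁻¹ * I₂) = c * (σ * I₁ + σ * lam * I₂) := by rw [hcinv]; ring
        _ ≤ c * (A + B) := by gcongr
        _ ≤ M * c * (A + B) := by nlinarith [mul_nonneg hc.le (add_nonneg hA₀ hB₀)]
    have h₂ : σ * (M * K * I₂) ≤ M * K * lam⁻¹ * (A + B) :=
      calc σ * (M * K * I₂) = M * K * lam⁻¹ * (σ * lam * I₂) := by field_simp
        _ ≤ M * K * lam⁻¹ * (A + B) := by gcongr; linarith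
    calc a ^ 2 * r ^ α ≤ c * I₁ + (c⁻¹ + M * K) * I₂ := h
      _ = (σ * (c * I₁ + c⁻¹ * I₂) + σ * (M * K * I₂)) / σ := by field_simp; ring
      _ ≤ (M * c * (A + B) + M * K * lam⁻¹ * (A + B)) / σ := by gcongr
      _ = _ := by ring
  calc |a| = √(a ^ 2 * r ^ α * r ^ (-α)) := by
        rw [mul_assoc, ← Real.rpow_add hr, add_neg_cancel, Real.rpow_zero, mul_one,
          Real.sqrt_sq_eq_abs]
    _ ≤ √(M / σ * (c + K * lam⁻¹) * (A + B) * r ^ (-α)) :=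
        Real.sqrt_le_sqrt (mul_le_mul_of_nonneg_right key (Real.rpow_nonneg hr.le _))
    _ = _ := by
        rw [Real.sqrt_mul (mul_nonneg hC (add_nonneg hA₀ hB₀)), Real.sqrt_mul hC,
          Real.sqrt_mul (by positivity), Real.sqrt_eq_rpow (r ^ (-α)), ← Real.rpow_mul hr.le]
        ring_nf

theorem radial_estimate_at_origin_general
    (N : ℕ)
    (V : ℝ → ℝ≥0∞) (hVmeas : Measurable V)
    (R γ : ℝ) (hγ : 2 ≤ γ)
    (hVfin : ∀ᵐ r ∂(volume.restrict (Set.Ioo 0 R)), V r < ⊤)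
    (lam : ℝ≥0∞)
    (hlam : lam = essInf (fun r : ℝ => ENNReal.ofReal (r ^ γ) * V r)
      (volume.restrict (Set.Ioo 0 R)))
    (hlampos : 0 < lam)
    (u : EuclideanSpace ℝ (Fin N) → ℝ) (hu : ContDiff ℝ 1 u)
    (hrad : ∃ w : ℝ → ℝ, ∀ x, u x = w ‖x‖)
    (hgrad : Integrable (fun x : EuclideanSpace ℝ (Fin N) => ‖fderiv ℝ u x‖ ^ 2))
    (hVu : (∫⁻ x : EuclideanSpace ℝ (Fin N), V ‖x‖ * ENNReal.ofReal ((u x) ^ 2)) < ⊤) :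
    ∀ x : EuclideanSpace ℝ (Fin N), 0 < ‖x‖ → ‖x‖ < R →
      |u x| ≤ Real.sqrt (max 2 ((N : ℝ) - 2) / sphereSurfaceMeasure N) *
        Real.sqrt (lam.toReal ^ (-(1 / 2 : ℝ)) + R ^ ((γ - 2) / 2) * lam.toReal⁻¹) *
        Real.sqrt ((∫ x : EuclideanSpace ℝ (Fin N), ‖fderiv ℝ u x‖ ^ 2) +
          (∫⁻ x : EuclideanSpace ℝ (Fin N), V ‖x‖ * ENNReal.ofReal ((u x) ^ 2)).toReal) *
        ‖x‖ ^ (-(2 * (N : ℝ) - 2 - γ) / 4) := by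
  intro x hx₀ hxR
  have : Nontrivial (EuclideanSpace ℝ (Fin N)) := nontrivial_of_ne x 0 (norm_pos_iff.mp hx₀)
  obtain ⟨e, he⟩ := exists_norm_eq (EuclideanSpace ℝ (Fin N)) zero_le_one
  obtain ⟨w, hw⟩ := hrad
  have hR : 0 < R := hx₀.trans hxR
  have hlam_top : lam ≠ ⊤ := (hlam ▸ essInf_lt_of_ae_lt (by simp [hR])
    (hVfin.mono fun t ht ↦ ENNReal.mul_lt_top ENNReal.ofReal_lt_top ht)).ne
  have hlam₀ : 0 < lam.toReal := ENNReal.toReal_pos hlampos.ne' hlam_top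
  obtain ⟨hI₁, hA⟩ := integrableOn_and_integral_radial_deriv_sq_le volume hw he hgrad
  obtain ⟨hI₂, hB⟩ := integrableOn_and_integral_potential_le volume hVmeas
    hu.continuous.measurable hw he hlampos.ne' hlam_top (hlam ▸ ae_essInf_le) hVu.ne
  have hdim : (dim (EuclideanSpace ℝ (Fin N)) : ℝ) = N := by simp
  rw [hdim] at hI₁ hA hI₂ hB
  have h1D := sq_mul_rpow_le_of_hasDerivAt (M := max 2 ((N : ℝ) - 2))
    (c := lam.toReal ^ (-(1 / 2 : ℝ))) hγ (le_max_of_le_left zero_le_two) (le_max_right _ _)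
    (Real.rpow_pos_of_pos hlam₀ _) hx₀ hxR
    (fun t _ ↦ hasDerivAt_apply_smul (hu.differentiable one_ne_zero _)) hI₁ hI₂
  rw [apply_eq_apply_norm_smul hw he x,
    show -(2 * (N : ℝ) - 2 - γ) / 4 = -((N : ℝ) - 1 - γ / 2) / 2 by ring,
    sphereSurfaceMeasure, ← measureReal_def]
  exact abs_le_of_sq_mul_rpow_le hx₀ (hdim ▸ finrank_mul_measureReal_ball_pos volume)
    hlam₀ (Real.rpow_nonneg hR.le _) (le_max_of_le_left one_le_two)
    (integral_nonneg fun _ ↦ by positivity) ENNReal.toReal_nonneg hA hB h1D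

theorem radial_estimate_at_origin
    (N : ℕ) (hN : 3 ≤ N)
    (V : ℝ → ℝ≥0∞) (hVmeas : Measurable V)
    (R γ : ℝ) (hR : 0 < R) (hγ : 2 ≤ γ)
    (hVfin : ∀ᵐ r ∂(volume.restrict (Set.Ioo 0 R)), V r < ⊤)
    (lam : ℝ≥0∞)
    (hlam : lam = essInf (fun r : ℝ => ENNReal.ofReal (r ^ γ) * V r)
      (volume.restrict (Set.Ioo 0 R)))
    (hlampos : 0 < lam)
    (u : EuclideanSpace ℝ (Fin N) → ℝ) (hu : ContDiff ℝ 1 u)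
    (hrad : ∃ w : ℝ → ℝ, ∀ x, u x = w ‖x‖)
    (hgrad : Integrable (fun x : EuclideanSpace ℝ (Fin N) => ‖fderiv ℝ u x‖ ^ 2))
    (hVu : (∫⁻ x : EuclideanSpace ℝ (Fin N), V ‖x‖ * ENNReal.ofReal ((u x) ^ 2)) < ⊤) :
    ∀ x : EuclideanSpace ℝ (Fin N), 0 < ‖x‖ → ‖x‖ < R →
      |u x| ≤ Real.sqrt (max 2 ((N : ℝ) - 2) / sphereSurfaceMeasure N) *
        Real.sqrt (lam.toReal ^ (-(1 / 2 : ℝ)) + R ^ ((γ - 2) / 2) * lam.toReal⁻¹) *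
        Real.sqrt ((∫ x : EuclideanSpace ℝ (Fin N), ‖fderiv ℝ u x‖ ^ 2) +
          (∫⁻ x : EuclideanSpace ℝ (Fin N), V ‖x‖ * ENNReal.ofReal ((u x) ^ 2)).toReal) *
        ‖x‖ ^ (-(2 * (N : ℝ) - 2 - γ) / 4) :=
  radial_estimate_at_origin_general N V hVmeas R γ hγ hVfin lam hlam hlampos u hu hrad hgrad hVu
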